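/- arXiv:1107.3009 — 6 statements merged into one kernel-verified Lean document; each statement's English description precedes it below -/
import Mathlib

section
/- Let R be a commutative ring, n ≥ 3 a natural number, and let 𝔞, 𝔟 be two comaximal ideals of R, i.e. 𝔞 + 𝔟 = R. Then ⁅E(n,R,𝔞), E(n,R,𝔟)⁆ = E(n,R,𝔞𝔟), where 𝔞𝔟 is the product of the two ideals. (Type A_{n−1} instance of the paper's Theorem 3; for type A the residue-field hypothesis is vacuous.) -/
open Matrix

/-- `SL n R` : the special linear group of degree `n` over `R`,
the simply connected Chevalley group of type `A_{n-1}`. -/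
abbrev SL (n : ℕ) (R : Type*) [CommRing R] := Matrix.SpecialLinearGroup (Fin n) R

/-- The elementary transvection `e_{ij}(a) = 1 + a·E_{ij}` as an element of `SL n R`. -/
def elemTransv {n : ℕ} {R : Type*} [CommRing R] (i j : Fin n) (h : i ≠ j) (a : R) :
    SL n R :=
  ⟨Matrix.transvection i j a, Matrix.det_transvection_of_ne i j h a⟩

/-- The set of elementary transvections with parameters in `S`. -/
def transvSet (n : ℕ) {R : Type*} [CommRing R] (S : Set R) : Set (SL n R) :=
  { x | ∃ i j : Fin n, ∃ h : i ≠ j, ∃ a ∈ S, x = elemTransv i j h a }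

/-- `E(n,S)` : the subgroup generated by elementary transvections with parameters in `S`. -/
def Esub (n : ℕ) {R : Type*} [CommRing R] (S : Set R) : Subgroup (SL n R) :=
  Subgroup.closure (transvSet n S)

/-- `E(n,T,S)` : the normal closure of `E(n,S)` in `E(n,T)`, i.e. the subgroup
generated by the conjugates of elementary generators of level `S` by elements
of `E(n,T)`. -/
def relESet (n : ℕ) {R : Type*} [CommRing R] (T S : Set R) : Subgroup (SL n R) :=
  Subgroup.closure
    { x | ∃ g ∈ Esub n T, ∃ y ∈ transvSet n S, x = g * y * g⁻¹ }

/-- `E(n,R,I)` : the relative elementary subgroup, the normal closure of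
`E(n,I)` in the absolute elementary subgroup `E(n,R)`. -/
def relE (n : ℕ) {R : Type*} [CommRing R] (I : Ideal R) : Subgroup (SL n R) :=
  relESet n (Set.univ : Set R) (I : Set R)

/-- The reduction homomorphism `SL(n,R) → SL(n,R/I)`. -/
def redMap (n : ℕ) {R : Type*} [CommRing R] (I : Ideal R) : SL n R →* SL n (R ⧸ I) :=
  Matrix.SpecialLinearGroup.map (Ideal.Quotient.mk I)

/-- `SL(n,R,I)` : the principal congruence subgroup of level `I`. -/
def SLcong (n : ℕ) {R : Type*} [CommRing R] (I : Ideal R) : Subgroup (SL n R) :=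
  (redMap n I).ker

/-- `C(n,R,I)` : the full congruence subgroup of level `I`. -/
def Ccong (n : ℕ) {R : Type*} [CommRing R] (I : Ideal R) : Subgroup (SL n R) :=
  Subgroup.comap (redMap n I) (Subgroup.center (SL n (R ⧸ I)))

/-!
Let `s + t = 1` with `s ∈ 𝔞`, `t ∈ 𝔟`, and work in `Q = E(n,R) / E(n,R,𝔞𝔟)`. The images of
transvections of level `𝔞` commute with those of level `𝔟`: in non-opposite positions by the
commutator formula `[e_ij(x), e_jk(y)] = e_ik(xy)`, and in opposite positions because
`e_ij(x) ≡ [e_im(x), e_mj(s)]` modulo `𝔞𝔟` for a third index `m`, and both factors commute with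
`e_ji(y)` by the first case. Since `e_ij(c) = e_ij(cs) e_ij(ct)`, the two families generate `Q`,
so the subgroup generated by either family is normalized by the other and is therefore normal; it
thus contains the image of the whole relative elementary subgroup, and the two images commute.
Conversely `e_ij(uv) = [e_im(u), e_mj(v)]` puts the generators of `E(n,R,𝔞𝔟)` into the commutator.
-/

open scoped commutatorElement

theorem Commute.commutatorElement_left {G : Type*} [Group G] {a b c : G} (ha : Commute a c)
    (hb : Commute b c) : Commute ⁅a, b⁆ c := by
  rw [commutatorElement_def]
  exact ((ha.mul_left hb).mul_left ha.inv_left).mul_left hb.inv_left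

theorem QuotientGroup.commute_mk'_iff {G : Type*} [Group G] {N : Subgroup G} [N.Normal]
    {x y : G} : Commute (mk' N x) (mk' N y) ↔ ⁅x, y⁆ ∈ N := by
  rw [← commutatorElement_eq_one_iff_commute, ← map_commutatorElement, ← MonoidHom.mem_ker,
    ker_mk']

namespace Subgroup

variable {G : Type*} [Group G]

theorem normalClosure_eq_closure_of_commute {X Y : Set G} (hgen : closure (X ∪ Y) = ⊤)
    (hcomm : ∀ x ∈ X, ∀ y ∈ Y, Commute x y) : normalClosure X = closure X := by
  have hY : Y ⊆ centralizer (closure X : Set G) := by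
    rw [centralizer_closure]
    exact fun y hy => mem_centralizer_iff.mpr fun x hx => hcomm x hx y hy
  have : (closure X).Normal := by
    rw [← normalizer_eq_top_iff, eq_top_iff, ← hgen, closure_le, Set.union_subset_iff]
    exact ⟨subset_closure.trans le_normalizer, hY.trans (centralizer_le_normalizer _)⟩
  exact le_antisymm (normalClosure_le_normal subset_closure) closure_le_normalClosure

theorem commutator_normalClosure_eq_bot_of_commute {X Y : Set G}
    (hgen : closure (X ∪ Y) = ⊤) (hcomm : ∀ x ∈ X, ∀ y ∈ Y, Commute x y) :
    ⁅normalClosure X, normalClosure Y⁆ = ⊥ := by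
  rw [normalClosure_eq_closure_of_commute hgen hcomm,
    normalClosure_eq_closure_of_commute (Set.union_comm X Y ▸ hgen)
      fun y hy x hx => (hcomm x hx y hy).symm,
    commutator_eq_bot_iff_le_centralizer, centralizer_closure, closure_le]
  exact fun x hx => mem_centralizer_iff.mpr fun y hy => (hcomm x hx y hy).eq.symm

theorem commutator_normalClosure_le {N : Subgroup G} [N.Normal] {X Y : Set G}
    (hgen : closure (X ∪ Y) = ⊤) (hcomm : ∀ x ∈ X, ∀ y ∈ Y, ⁅x, y⁆ ∈ N) :
    ⁅normalClosure X, normalClosure Y⁆ ≤ N := by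
  have hmk := QuotientGroup.mk'_surjective N
  rw [← QuotientGroup.ker_mk' N, ← map_eq_bot_iff, map_commutator,
    map_normalClosure _ _ hmk, map_normalClosure _ _ hmk]
  apply commutator_normalClosure_eq_bot_of_commute
  · rw [← Set.image_union, ← MonoidHom.map_closure, hgen, map_top_of_surjective _ hmk]
  · rintro _ ⟨x, hx, rfl⟩ _ ⟨y, hy, rfl⟩
    exact QuotientGroup.commute_mk'_iff.mpr (hcomm x hx y hy)

theorem closure_conj_eq_map_normalClosure (H : Subgroup G) {s : Set G} (hs : s ⊆ H) :
    closure {x | ∃ g ∈ H, ∃ y ∈ s, x = g * y * g⁻¹} =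
      (normalClosure (((↑) : H → G) ⁻¹' s)).map H.subtype := by
  rw [normalClosure, MonoidHom.map_closure]
  congr 1
  ext x
  simp only [Set.mem_image, Group.mem_conjugatesOfSet_iff, isConj_iff]
  constructor
  · rintro ⟨g, hg, y, hy, rfl⟩
    exact ⟨⟨g, hg⟩ * ⟨y, hs hy⟩ * ⟨g, hg⟩⁻¹, ⟨⟨y, hs hy⟩, hy, ⟨g, hg⟩, rfl⟩, rfl⟩
  · rintro ⟨_, ⟨y, hy, g, rfl⟩, rfl⟩
    exact ⟨g, g.2, y, hy, rfl⟩

end Subgroup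

section Transvection

variable {n : ℕ} {R : Type*} [CommRing R]

theorem elemTransv_add (i j : Fin n) (h : i ≠ j) (x y : R) :
    elemTransv i j h (x + y) = elemTransv i j h x * elemTransv i j h y :=
  Subtype.ext (Matrix.transvection_mul_transvection_same i j h x y).symm

theorem commute_elemTransv {i j k l : Fin n} (hij : i ≠ j) (hkl : k ≠ l) (hjk : j ≠ k)
    (hli : l ≠ i) (x y : R) : Commute (elemTransv i j hij x) (elemTransv k l hkl y) := by
  apply Subtype.ext
  change Matrix.transvection i j x * Matrix.transvection k l y
    = Matrix.transvection k l y * Matrix.transvection i j x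
  simp only [Matrix.transvection, add_mul, mul_add, one_mul, mul_one,
    Matrix.single_mul_single_of_ne, hjk, hli, Ne, not_false_eq_true, add_zero]
  abel

theorem commutatorElement_elemTransv {i j k : Fin n} (hij : i ≠ j) (hjk : j ≠ k) (hik : i ≠ k)
    (x y : R) : ⁅elemTransv i j hij x, elemTransv j k hjk y⁆ = elemTransv i k hik (x * y) := by
  have : elemTransv i j hij x * elemTransv j k hjk y
      = elemTransv i k hik (x * y) * (elemTransv j k hjk y * elemTransv i j hij x) := by
    apply Subtype.ext
    change Matrix.transvection i j x * Matrix.transvection j k y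
      = Matrix.transvection i k (x * y) * (Matrix.transvection j k y * Matrix.transvection i j x)
    simp only [Matrix.transvection, add_mul, mul_add, one_mul, mul_one,
      Matrix.single_mul_single_same, Matrix.single_mul_single_of_ne,
      hik.symm, hjk.symm, Ne, not_false_eq_true, add_zero]
    abel
  rw [commutatorElement_def, this]
  group

end Transvection

/- `E(n,R,I)` is normal in `E(n,R)` but in general not in `SL(n,R)`, so the argument takes place
in the group `E(n,R)`, where `E(n,R,I)` is the normal closure of the transvections of level `I`. -/
section Elementary

open Subgroup

variable {n : ℕ} {R : Type*} [CommRing R]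

local notation "E(" n ", " R ")" => Esub n (Set.univ : Set R)

def elemTransvE (i j : Fin n) (h : i ≠ j) (c : R) : E(n, R) :=
  ⟨elemTransv i j h c, subset_closure ⟨i, j, h, c, trivial, rfl⟩⟩

def transvSetE (n : ℕ) (I : Ideal R) : Set E(n, R) :=
  ((↑) : E(n, R) → SL n R) ⁻¹' transvSet n (I : Set R)

theorem mem_transvSetE_iff {I : Ideal R} {x : E(n, R)} :
    x ∈ transvSetE n I ↔ ∃ i j, ∃ h : i ≠ j, ∃ c ∈ I, x = elemTransvE i j h c := by
  constructor
  · rintro ⟨i, j, h, c, hc, hx⟩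
    exact ⟨i, j, h, c, hc, Subtype.ext hx⟩
  · rintro ⟨i, j, h, c, hc, rfl⟩
    exact ⟨i, j, h, c, hc, rfl⟩

theorem elemTransvE_mem_normalClosure {I : Ideal R} (i j : Fin n) (h : i ≠ j) {c : R}
    (hc : c ∈ I) : elemTransvE i j h c ∈ normalClosure (transvSetE n I) :=
  subset_normalClosure ⟨i, j, h, c, hc, rfl⟩

theorem elemTransvE_add (i j : Fin n) (h : i ≠ j) (x y : R) :
    elemTransvE i j h (x + y) = elemTransvE i j h x * elemTransvE i j h y :=
  Subtype.ext (elemTransv_add i j h x y)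

theorem commute_elemTransvE {i j k l : Fin n} (hij : i ≠ j) (hkl : k ≠ l) (hjk : j ≠ k)
    (hli : l ≠ i) (x y : R) : Commute (elemTransvE i j hij x) (elemTransvE k l hkl y) :=
  Subtype.ext (commute_elemTransv hij hkl hjk hli x y)

theorem commutatorElement_elemTransvE {i j k : Fin n} (hij : i ≠ j) (hjk : j ≠ k) (hik : i ≠ k)
    (x y : R) : ⁅elemTransvE i j hij x, elemTransvE j k hjk y⁆ = elemTransvE i k hik (x * y) :=
  Subtype.ext (commutatorElement_elemTransv hij hjk hik x y)

theorem relE_eq_map_normalClosure (I : Ideal R) :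
    relE n I = (normalClosure (transvSetE n I)).map E(n, R).subtype := by
  refine closure_conj_eq_map_normalClosure _ ?_
  rintro _ ⟨i, j, h, c, -, rfl⟩
  exact (elemTransvE i j h c).2

theorem closure_transvSetE_union_eq_top {a b : Ideal R} (hab : a + b = ⊤) :
    Subgroup.closure (transvSetE n a ∪ transvSetE n b) = ⊤ := by
  obtain ⟨s, hs, t, ht, hst⟩ := Ideal.add_eq_one_iff.mp (hab.trans Ideal.one_eq_top.symm)
  have hgen : closure (transvSetE n (⊤ : Ideal R)) = ⊤ :=
    closure_closure_coe_preimage (k := transvSet n Set.univ)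
  rw [eq_top_iff, ← hgen, closure_le]
  intro x hx
  obtain ⟨i, j, hij, c, -, rfl⟩ := mem_transvSetE_iff.mp hx
  have hsplit :
      elemTransvE i j hij c = elemTransvE i j hij (c * s) * elemTransvE i j hij (c * t) := by
    rw [← elemTransvE_add, ← mul_add, hst, mul_one]
  rw [hsplit]
  exact mul_mem
    (Subgroup.subset_closure (Or.inl ⟨i, j, hij, c * s, a.mul_mem_left c hs, rfl⟩))
    (Subgroup.subset_closure (Or.inr ⟨i, j, hij, c * t, b.mul_mem_left c ht, rfl⟩))

variable {a b : Ideal R}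

theorem commutator_elemTransvE_mem_of_not_opposite {i j k l : Fin n} (hij : i ≠ j)
    (hkl : k ≠ l) (hopp : ¬(j = k ∧ l = i)) {x y : R} (hx : x ∈ a) (hy : y ∈ b) :
    ⁅elemTransvE i j hij x, elemTransvE k l hkl y⁆ ∈ normalClosure (transvSetE n (a * b)) := by
  by_cases hjk : j = k
  · subst hjk
    have hil : i ≠ l := fun h => hopp ⟨rfl, h.symm⟩
    rw [commutatorElement_elemTransvE hij hkl hil]
    exact elemTransvE_mem_normalClosure _ _ _ (Ideal.mul_mem_mul hx hy)
  by_cases hli : l = i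
  · subst hli
    rw [← commutatorElement_inv, commutatorElement_elemTransvE hkl hij (Ne.symm hjk)]
    exact inv_mem (elemTransvE_mem_normalClosure _ _ _ (Ideal.mul_mem_mul_rev hx hy))
  rw [commutatorElement_eq_one_iff_commute.mpr (commute_elemTransvE hij hkl hjk hli x y)]
  exact one_mem _

theorem commutator_elemTransvE_opposite_mem (hn : 3 ≤ n) (hab : a + b = ⊤) {i j : Fin n}
    (hij : i ≠ j) (hji : j ≠ i) {x y : R} (hx : x ∈ a) (hy : y ∈ b) :
    ⁅elemTransvE i j hij x, elemTransvE j i hji y⁆ ∈ normalClosure (transvSetE n (a * b)) := by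
  obtain ⟨s, hs, t, ht, hst⟩ := Ideal.add_eq_one_iff.mp (hab.trans Ideal.one_eq_top.symm)
  obtain ⟨m, hmi, hmj⟩ := Fin.exists_ne_and_ne_of_two_lt i j hn
  have hsplit : elemTransvE i j hij x
      = ⁅elemTransvE i m hmi.symm x, elemTransvE m j hmj s⁆ * elemTransvE i j hij (x * t) := by
    rw [commutatorElement_elemTransvE, ← elemTransvE_add, ← mul_add, hst, mul_one]
  have hxt : QuotientGroup.mk' _ (elemTransvE i j hij (x * t)) = 1 :=
    (QuotientGroup.eq_one_iff _).mpr
      (elemTransvE_mem_normalClosure _ _ _ (Ideal.mul_mem_mul hx ht))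
  have h1 := QuotientGroup.commute_mk'_iff.mpr
    (commutator_elemTransvE_mem_of_not_opposite hmi.symm hji (fun h => hmj h.1) hx hy)
  have h2 := QuotientGroup.commute_mk'_iff.mpr
    (commutator_elemTransvE_mem_of_not_opposite hmj hji (fun h => hmi h.2.symm) hs hy)
  rw [← QuotientGroup.commute_mk'_iff, hsplit, map_mul, hxt, mul_one, map_commutatorElement]
  exact h1.commutatorElement_left h2

theorem commutator_mem_normalClosure_of_mem_transvSetE (hn : 3 ≤ n) (hab : a + b = ⊤)
    {x y : E(n, R)} (hx : x ∈ transvSetE n a) (hy : y ∈ transvSetE n b) :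
    ⁅x, y⁆ ∈ normalClosure (transvSetE n (a * b)) := by
  obtain ⟨i, j, hij, c, hc, rfl⟩ := mem_transvSetE_iff.mp hx
  obtain ⟨k, l, hkl, d, hd, rfl⟩ := mem_transvSetE_iff.mp hy
  by_cases hopp : j = k ∧ l = i
  · obtain ⟨rfl, rfl⟩ := hopp
    exact commutator_elemTransvE_opposite_mem hn hab hij hkl hc hd
  · exact commutator_elemTransvE_mem_of_not_opposite hij hkl hopp hc hd

theorem normalClosure_transvSetE_mul_le_commutator (hn : 3 ≤ n) :
    normalClosure (transvSetE n (a * b)) ≤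
      ⁅normalClosure (transvSetE n a), normalClosure (transvSetE n b)⁆ := by
  refine normalClosure_le_normal fun x hx => ?_
  obtain ⟨i, j, hij, c, hc, rfl⟩ := mem_transvSetE_iff.mp hx
  obtain ⟨m, hmi, hmj⟩ := Fin.exists_ne_and_ne_of_two_lt i j hn
  refine Submodule.mul_induction_on hc (fun u hu v hv => ?_) (fun u v hu hv => ?_)
  · rw [← commutatorElement_elemTransvE hmi.symm hmj hij]
    exact commutator_mem_commutator (elemTransvE_mem_normalClosure _ _ _ hu)
      (elemTransvE_mem_normalClosure _ _ _ hv)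
  · rw [elemTransvE_add]
    exact mul_mem hu hv

theorem commutator_normalClosure_transvSetE (hn : 3 ≤ n) (hab : a + b = ⊤) :
    ⁅normalClosure (transvSetE n a), normalClosure (transvSetE n b)⁆ =
      normalClosure (transvSetE n (a * b)) :=
  le_antisymm
    (commutator_normalClosure_le (closure_transvSetE_union_eq_top hab)
      fun _ hx _ hy => commutator_mem_normalClosure_of_mem_transvSetE hn hab hx hy)
    (normalClosure_transvSetE_mul_le_commutator hn)

end Elementary

/-- For a commutative ring `R`, `n ≥ 3` and comaximal ideals `𝔞 + 𝔟 = R`,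
`⁅E(n,R,𝔞), E(n,R,𝔟)⁆ = E(n,R,𝔞𝔟)`. -/
theorem commutator_relE_relE_eq_relE_mul_of_comaximal
    {R : Type*} [CommRing R] (n : ℕ) (hn : 3 ≤ n) (a b : Ideal R)
    (hab : a + b = ⊤) :
    ⁅relE n a, relE n b⁆ = relE n (a * b) := by
  rw [relE_eq_map_normalClosure, relE_eq_map_normalClosure, relE_eq_map_normalClosure,
    ← Subgroup.map_commutator, commutator_normalClosure_transvSetE hn hab]
end

section
/- Let R be a Noetherian commutative ring, s ∈ R, and n ≥ 1 a natural number. Then there exists a natural number k such that the group homomorphism F_s : SL(n,R) → SL(n,R_s) induced by the localization homomorphism R → R_s is injective on the principal congruence subgroup SL(n,R, s^kR), where s^kR is the principal ideal generated by s^k. (Type A_{n−1} instance of the paper's Lemma on injectivity of the localization homomorphism for Noetherian rings.) -/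
/-!
In a Noetherian ring the annihilators of the powers `s ^ m` stabilise, say from `k` on. The kernel
of `R → R_s` is the `s`-power torsion, hence equals `Ann(s ^ k)`, and this meets `s ^ k R`
trivially. Two matrices congruent to `1` modulo `s ^ k` with the same image over `R_s` therefore
differ entrywise by elements of `s ^ k R ∩ ker (R → R_s) = 0`.
-/

open Matrix

/-- The homomorphism `SL(n,R) → SL(n,R_s)` induced by the localization map
`F_s : R → R_s = Localization.Away s`, applied entrywise. -/
noncomputable def locMap (n : ℕ) {R : Type*} [CommRing R] (s : R) :
    SL n R →* SL n (Localization.Away s) :=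
  Matrix.SpecialLinearGroup.map (algebraMap R (Localization.Away s))

theorem exists_disjoint_span_pow_ker_algebraMap_away {R : Type*} [CommRing R]
    [IsNoetherianRing R] (s : R) :
    ∃ k : ℕ, Disjoint (Ideal.span {s ^ k}) (RingHom.ker (algebraMap R (Localization.Away s))) := by
  let f := LinearMap.mulLeft R s
  obtain ⟨k, hsup, hdisj⟩ :=
    (f.eventually_iSup_ker_pow_eq.and (Module.End.eventually_disjoint_ker_pow_range_pow f)).exists
  refine ⟨k, ?_⟩
  have hrange : Ideal.span {s ^ k} = LinearMap.range (f ^ k) := by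
    ext x
    simp [f, LinearMap.pow_mulLeft, Ideal.mem_span_singleton', mul_comm]
  have hker : RingHom.ker (algebraMap R (Localization.Away s)) = ⨆ m, LinearMap.ker (f ^ m) := by
    ext x
    rw [RingHom.mem_ker, IsLocalization.map_eq_zero_iff (Submonoid.powers s),
      Submodule.mem_iSup_of_directed (fun m ↦ LinearMap.ker (f ^ m))
        f.iterateKer.monotone.directed_le]
    simp [f, LinearMap.pow_mulLeft, Submonoid.mem_powers_iff]
  rw [hrange, hker, hsup]
  exact hdisj.symm

theorem injOn_map_SLcong_of_disjoint_ker {R S : Type*} [CommRing R] [CommRing S] {n : ℕ}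
    {I : Ideal R} {φ : R →+* S} (hI : Disjoint I (RingHom.ker φ)) :
    Set.InjOn (Matrix.SpecialLinearGroup.map φ) (SLcong n I : Set (SL n R)) := by
  intro A hA B hB hAB
  ext i j
  have hmod : A i j - B i j ∈ I := by
    rw [← Ideal.Quotient.eq]
    simpa [redMap] using congrArg (fun M : SL n (R ⧸ I) => M i j) (hA.trans hB.symm)
  have hloc : A i j - B i j ∈ RingHom.ker φ := by
    rw [RingHom.mem_ker, map_sub, sub_eq_zero]
    simpa using congrArg (fun M : SL n S => M i j) hAB
  exact sub_eq_zero.mp (hI.le_bot ⟨hmod, hloc⟩)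

theorem exists_locMap_injOn_SLcong_of_noetherian_general
    {R : Type*} [CommRing R] [IsNoetherianRing R] (n : ℕ) (s : R) :
    ∃ k : ℕ, Set.InjOn (locMap n s)
      (SLcong n (Ideal.span ({s ^ k} : Set R)) : Set (SL n R)) := by
  obtain ⟨k, hk⟩ := exists_disjoint_span_pow_ker_algebraMap_away s
  exact ⟨k, injOn_map_SLcong_of_disjoint_ker hk⟩

/-- For a Noetherian commutative ring `R`, `s ∈ R` and `n ≥ 1`, there is `k`
such that `F_s : SL(n,R) → SL(n,R_s)` is injective on `SL(n,R,s^kR)`. -/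
theorem exists_locMap_injOn_SLcong_of_noetherian
    {R : Type*} [CommRing R] [IsNoetherianRing R] (n : ℕ) (hn : 1 ≤ n) (s : R) :
    ∃ k : ℕ, Set.InjOn (locMap n s)
      (SLcong n (Ideal.span ({s ^ k} : Set R)) : Set (SL n R)) :=
  exists_locMap_injOn_SLcong_of_noetherian_general n s
end

section
/- Let R be a commutative ring whose Jacobson radical is zero, let s ∈ R with s ≠ 0, and let n ≥ 1 be a natural number. Then the group homomorphism F_s : SL(n,R) → SL(n,R_s) induced by the localization homomorphism R → R_s is injective on the principal congruence subgroup SL(n,R, sR), where sR is the principal ideal generated by s. (Type A_{n−1} instance of the paper's Lemma on injectivity of the localization homomorphism for rings with Rad(R) = 0.) -/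
open Matrix

/- If `x = c * s` dies in `R_s`, then `s ^ k * x = 0` for some `k`, so
`x ^ (k + 1) = c ^ k * (s ^ k * x) = 0`; a ring with `Rad(R) = 0` is reduced, so `x = 0`.
Two matrices of `SL(n,R,sR)` are congruent modulo `s`, so each entry of their difference is
such an `x` once their images in `SL(n,R_s)` agree. -/

theorem isReduced_of_jacobson_bot_eq_bot {R : Type*} [CommRing R]
    (hrad : Ideal.jacobson (⊥ : Ideal R) = ⊥) : IsReduced R :=
  nilradical_eq_bot_iff.mp <| le_bot_iff.mp <| hrad ▸ Ideal.radical_le_jacobson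

theorem isNilpotent_of_mem_span_singleton_of_pow_mul_eq_zero {R : Type*} [CommRing R]
    {s x : R} (hx : x ∈ Ideal.span {s}) {k : ℕ} (hk : s ^ k * x = 0) : IsNilpotent x := by
  obtain ⟨c, rfl⟩ := Ideal.mem_span_singleton'.mp hx
  exact ⟨k + 1, calc (c * s) ^ (k + 1) = c ^ k * (s ^ k * (c * s)) := by ring
    _ = 0 := by rw [hk, mul_zero]⟩

theorem Localization.Away.ker_algebraMap_inf_span_singleton_eq_bot {R : Type*} [CommRing R]
    [IsReduced R] (s : R) :
    RingHom.ker (algebraMap R (Localization.Away s)) ⊓ Ideal.span {s} = ⊥ := by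
  refine eq_bot_iff.mpr fun x ⟨hker, hspan⟩ => ?_
  obtain ⟨⟨_, k, rfl⟩, hk⟩ :=
    (IsLocalization.map_eq_zero_iff (Submonoid.powers s) _ x).mp (RingHom.mem_ker.mp hker)
  exact (isNilpotent_of_mem_span_singleton_of_pow_mul_eq_zero hspan hk).eq_zero

theorem sub_mem_of_mem_SLcong {n : ℕ} {R : Type*} [CommRing R] {I : Ideal R} {A B : SL n R}
    (hA : A ∈ SLcong n I) (hB : B ∈ SLcong n I) (i j : Fin n) : A i j - B i j ∈ I := by
  have hAB : redMap n I A = redMap n I B :=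
    (MonoidHom.mem_ker.mp hA).trans (MonoidHom.mem_ker.mp hB).symm
  exact Ideal.Quotient.eq.mp (congrFun (congrFun (congrArg Subtype.val hAB) i) j)

theorem locMap_injOn_SLcong_of_jacobson_eq_bot_general
    {R : Type*} [CommRing R] (hrad : Ideal.jacobson (⊥ : Ideal R) = ⊥)
    (n : ℕ) (s : R) :
    Set.InjOn (locMap n s)
      (SLcong n (Ideal.span ({s} : Set R)) : Set (SL n R)) := by
  intro A hA B hB hAB
  have := isReduced_of_jacobson_bot_eq_bot hrad
  ext i j
  have hker : A i j - B i j ∈ RingHom.ker (algebraMap R (Localization.Away s)) := by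
    rw [RingHom.mem_ker, map_sub, sub_eq_zero]
    exact congrFun (congrFun (congrArg Subtype.val hAB) i) j
  rw [← sub_eq_zero, ← Ideal.mem_bot,
    ← Localization.Away.ker_algebraMap_inf_span_singleton_eq_bot s]
  exact ⟨hker, sub_mem_of_mem_SLcong hA hB i j⟩

/-- For a commutative ring `R` with `Rad(R) = 0`, `s ≠ 0` and `n ≥ 1`,
`F_s : SL(n,R) → SL(n,R_s)` is injective on `SL(n,R,sR)`. -/
theorem locMap_injOn_SLcong_of_jacobson_eq_bot
    {R : Type*} [CommRing R] (hrad : Ideal.jacobson (⊥ : Ideal R) = ⊥)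
    (n : ℕ) (hn : 1 ≤ n) (s : R) (hs : s ≠ 0) :
    Set.InjOn (locMap n s)
      (SLcong n (Ideal.span ({s} : Set R)) : Set (SL n R)) :=
  locMap_injOn_SLcong_of_jacobson_eq_bot_general hrad n s
end

section
/- Let R be a commutative local ring, n ≥ 2 a natural number, and 𝔞 an ideal of R. Then SL(n,R,𝔞) = E(n,𝔞)·T(n,R,𝔞): every g in the principal congruence subgroup SL(n,R,𝔞) can be written g = e·h with e ∈ E(n,𝔞) and h a diagonal matrix of determinant 1 satisfying h_{ii} − 1 ∈ 𝔞 for all i, and conversely every such product lies in SL(n,R,𝔞). (Type A_{n−1} instance of the paper's Lemma: for an ideal 𝔞 of a local ring, G(Φ,R,𝔞) = E(Φ,𝔞) T(Φ,R,𝔞).) -/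
open Matrix

/-!
Row reduction by transvections of level `a`, one column at a time. The diagonal entry of the
current column is first made a unit: for `a ≠ ⊤` it already is one, being `≡ 1` modulo
`a ⊆ 𝔪`; for `a = ⊤` some entry on or below the diagonal is a unit, because the inverse matrix
shows that these entries generate the unit ideal, and adding its row to the diagonal row gives a
unit pivot. The off-diagonal entries of the column lie in `a` and are then cleared by adding
`a`-multiples of the pivot row, which leaves the columns already cleared untouched.
-/

section

variable {n : ℕ} {R : Type*} [CommRing R] {a : Ideal R}

theorem mem_SLcong_iff {g : SL n R} :
    g ∈ SLcong n a ↔ (∀ i j, i ≠ j → g.val i j ∈ a) ∧ ∀ i, g.val i i - 1 ∈ a := by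
  refine MonoidHom.mem_ker.trans ((Matrix.SpecialLinearGroup.ext_iff _ _).trans ?_)
  constructor
  · intro h
    refine ⟨fun i j hij => ?_, fun i => ?_⟩
    · simpa [redMap, hij, Ideal.Quotient.eq_zero_iff_mem] using h i j
    · simpa [redMap, ← Ideal.Quotient.eq, Ideal.Quotient.mk_eq_mk] using h i i
  · rintro ⟨hoff, hdiag⟩ i j
    rcases eq_or_ne i j with rfl | hij
    · simpa [redMap, ← Ideal.Quotient.eq, Ideal.Quotient.mk_eq_mk] using hdiag i
    · simpa [redMap, hij, Ideal.Quotient.eq_zero_iff_mem] using hoff i j hij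

theorem elemTransv_mem_SLcong {i j : Fin n} (hij : i ≠ j) {c : R} (hc : c ∈ a) :
    elemTransv i j hij c ∈ SLcong n a := by
  refine mem_SLcong_iff.2 ⟨fun r k hrk => ?_, fun r => ?_⟩
  · simp only [elemTransv, transvection, Matrix.add_apply, one_apply_ne hrk, zero_add,
      single_apply]
    split_ifs <;> simp [hc]
  · have : ¬(i = r ∧ j = r) := fun h => hij (h.1.trans h.2.symm)
    simp [elemTransv, transvection, this]

theorem Esub_le_SLcong : Esub n (a : Set R) ≤ SLcong n a :=
  (Subgroup.closure_le _).2 fun _ ⟨_, _, hij, _, hc, he⟩ => he ▸ elemTransv_mem_SLcong hij hc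

theorem exists_mem_Esub_val_eq_one_add_sum_single {p : Fin n} {c : Fin n → R}
    (hc : ∀ r, c r ∈ a) {s : Finset (Fin n)} (hp : p ∉ s) :
    ∃ e ∈ Esub n (a : Set R), e.val = 1 + ∑ r ∈ s, single r p (c r) := by
  induction s using Finset.induction with
  | empty => exact ⟨1, one_mem _, by simp⟩
  | @insert r s hr ih =>
    obtain ⟨e, he, hval⟩ := ih (fun h => hp (Finset.mem_insert_of_mem h))
    have hrp : r ≠ p := by rintro rfl; exact hp (Finset.mem_insert_self r s)
    refine ⟨elemTransv r p hrp (c r) * e,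
      mul_mem (Subgroup.subset_closure ⟨r, p, hrp, c r, hc r, rfl⟩) he, ?_⟩
    have hkill : single r p (c r) * ∑ q ∈ s, single q p (c q) = 0 := by
      rw [Finset.mul_sum]
      refine Finset.sum_eq_zero fun q hq => single_mul_single_of_ne _ _ _ _ ?_ _
      rintro rfl; exact hp (Finset.mem_insert_of_mem hq)
    rw [Matrix.SpecialLinearGroup.coe_mul, hval, Finset.sum_insert hr]
    simp only [elemTransv, transvection]
    rw [add_mul, one_mul, mul_add, mul_one, hkill]
    abel

theorem exists_mem_Esub_mul_apply_eq_add (p : Fin n) {c : Fin n → R} (hc : ∀ r, c r ∈ a)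
    (hcp : c p = 0) (M : SL n R) :
    ∃ e ∈ Esub n (a : Set R), ∀ r k, (e * M).val r k = M.val r k + c r * M.val p k := by
  obtain ⟨e, he, hval⟩ :=
    exists_mem_Esub_val_eq_one_add_sum_single hc (Finset.notMem_erase p Finset.univ)
  refine ⟨e, he, fun r k => ?_⟩
  rw [Matrix.SpecialLinearGroup.coe_mul, hval, add_mul, one_mul, Finset.sum_mul, Matrix.add_apply,
    Matrix.sum_apply, Finset.sum_eq_single r, single_mul_apply_same]
  · exact fun q _ hqr => single_mul_apply_of_ne _ _ _ _ _ (Ne.symm hqr) _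
  · intro hr
    obtain rfl : r = p := by simpa using hr
    simp [hcp]

def ClearedUpTo (m : ℕ) (M : Matrix (Fin n) (Fin n) R) : Prop :=
  ∀ i k : Fin n, (k : ℕ) < m → i ≠ k → M i k = 0

theorem ClearedUpTo.mul_apply {m : ℕ} {M : Matrix (Fin n) (Fin n) R} (hM : ClearedUpTo m M)
    (N : Matrix (Fin n) (Fin n) R) (r : Fin n) {k : Fin n} (hk : (k : ℕ) < m) :
    (N * M) r k = N r k * M k k := by
  rw [Matrix.mul_apply, Finset.sum_eq_single k (fun q _ hqk => by rw [hM q k hk hqk, mul_zero])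
    (by simp)]

theorem ClearedUpTo.of_apply_eq_add {m : ℕ} {M N : Matrix (Fin n) (Fin n) R}
    (hM : ClearedUpTo m M) {p : Fin n} (hp : m ≤ p) {c : Fin n → R}
    (hN : ∀ r k, N r k = M r k + c r * M p k) : ClearedUpTo m N := by
  intro r k hk hrk
  rw [hN, hM r k hk hrk, hM p k hk (Fin.ne_of_val_ne (by omega)), mul_zero, add_zero]

theorem exists_le_isUnit_of_clearedUpTo [IsLocalRing R] {M : SL n R} {j : Fin n}
    (hM : ClearedUpTo j M.val) : ∃ i, j ≤ i ∧ IsUnit (M.val i j) := by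
  set N := (M⁻¹ : SL n R).val
  have hNM : N * M.val = 1 := by
    rw [← Matrix.SpecialLinearGroup.coe_mul, inv_mul_cancel]; rfl
  have hN : ∀ k : Fin n, k < j → N j k = 0 := by
    intro k hk
    have hkk : IsUnit (M.val k k) :=
      .of_mul_eq_one_right _ (by rw [← hM.mul_apply N k hk, hNM, one_apply_eq])
    have := hM.mul_apply N j hk
    rwa [hNM, one_apply_ne (ne_of_gt hk), eq_comm, hkk.mul_left_eq_zero] at this
  have hsum : IsUnit (∑ l, N j l * M.val l j) := by
    rw [← Matrix.mul_apply, hNM, one_apply_eq]; exact isUnit_one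
  obtain ⟨l, -, hl⟩ := IsLocalRing.exists_of_isUnit_sum hsum
  refine ⟨l, not_lt.1 fun hlj => ?_, isUnit_of_mul_isUnit_right hl⟩
  rw [hN l hlj, zero_mul] at hl
  exact not_isUnit_zero hl

theorem exists_mem_Esub_isUnit_apply_self [IsLocalRing R] {M : SL n R} (hM : M ∈ SLcong n a)
    {j : Fin n} (hcl : ClearedUpTo j M.val) :
    ∃ f ∈ Esub n (a : Set R), ClearedUpTo j (f * M).val ∧ IsUnit ((f * M).val j j) := by
  by_cases hjj : IsUnit (M.val j j)
  · exact ⟨1, one_mem _, by simpa using hcl, by simpa using hjj⟩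
  have ha : a = ⊤ := by
    by_contra ha
    have h1 : 1 - M.val j j ∈ IsLocalRing.maximalIdeal R :=
      IsLocalRing.le_maximalIdeal ha (by simpa using a.neg_mem ((mem_SLcong_iff.1 hM).2 j))
    exact hjj (by simpa using IsLocalRing.isUnit_one_sub_self_of_mem_nonunits _ h1)
  subst ha
  obtain ⟨i, hji, hi⟩ := exists_le_isUnit_of_clearedUpTo hcl
  have hij : i ≠ j := by rintro rfl; exact hjj hi
  obtain ⟨f, hf, hfM⟩ := exists_mem_Esub_mul_apply_eq_add i (c := Pi.single j 1)
    (fun _ => Submodule.mem_top) (Pi.single_eq_of_ne hij _) M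
  refine ⟨f, hf, hcl.of_apply_eq_add hji hfM, ?_⟩
  rw [hfM, Pi.single_eq_same, one_mul]
  -- if `M j j` is not a unit, then `M j j + M i j` is one
  exact (IsLocalRing.isUnit_or_isUnit_of_isUnit_add (a := M.val j j + M.val i j)
    (b := -M.val j j) (by simpa using hi)).resolve_right (by simpa using hjj)

theorem exists_mem_Esub_clearedUpTo_succ [IsLocalRing R] {M : SL n R} (hM : M ∈ SLcong n a)
    {j : Fin n} (hcl : ClearedUpTo j M.val) :
    ∃ e ∈ Esub n (a : Set R), ClearedUpTo (j + 1) (e * M).val := by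
  obtain ⟨f, hf, hfcl, u, hu⟩ := exists_mem_Esub_isUnit_apply_self hM hcl
  set N := f * M
  have hoff := (mem_SLcong_iff.1 (mul_mem (Esub_le_SLcong hf) hM)).1
  obtain ⟨e, he, heN⟩ := exists_mem_Esub_mul_apply_eq_add j
    (c := fun r => if r = j then 0 else -(N.val r j * ↑u⁻¹))
    (fun r => by
      split_ifs with h
      exacts [a.zero_mem, a.neg_mem (a.mul_mem_right _ (hoff r j h))])
    (if_pos rfl) N
  refine ⟨e * f, mul_mem he hf, mul_assoc e f M ▸ fun r k hk hrk => ?_⟩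
  rcases Nat.lt_succ_iff_lt_or_eq.1 hk with hk | hk
  · exact hfcl.of_apply_eq_add le_rfl heN r k hk hrk
  · obtain rfl : k = j := Fin.ext hk
    rw [heN, if_neg hrk, ← hu]
    simp

theorem exists_mem_Esub_clearedUpTo [IsLocalRing R] {g : SL n R} (hg : g ∈ SLcong n a) :
    ∀ m ≤ n, ∃ e ∈ Esub n (a : Set R), ClearedUpTo m (e * g).val
  | 0, _ => ⟨1, one_mem _, fun _ _ hk => absurd hk (Nat.not_lt_zero _)⟩
  | m + 1, hm => by
    obtain ⟨e, he, hcl⟩ := exists_mem_Esub_clearedUpTo hg m (by omega)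
    obtain ⟨e', he', hcl'⟩ := exists_mem_Esub_clearedUpTo_succ (j := ⟨m, hm⟩)
      (mul_mem (Esub_le_SLcong he) hg) hcl
    exact ⟨e' * e, mul_mem he' he, mul_assoc e' e g ▸ hcl'⟩

end

theorem SLcong_eq_Esub_mul_torus_of_localRing_general
    {R : Type*} [CommRing R] [IsLocalRing R] (n : ℕ) (a : Ideal R)
    (g : SL n R) :
    g ∈ SLcong n a ↔
      ∃ e ∈ Esub n (a : Set R), ∃ h : SL n R,
        (∀ i j : Fin n, i ≠ j → h.val i j = 0) ∧
        (∀ i : Fin n, h.val i i - 1 ∈ a) ∧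
        g = e * h := by
  constructor
  · intro hg
    obtain ⟨e, he, hcl⟩ := exists_mem_Esub_clearedUpTo hg n le_rfl
    exact ⟨e⁻¹, inv_mem he, e * g, fun i j hij => hcl i j j.isLt hij,
      (mem_SLcong_iff.1 (mul_mem (Esub_le_SLcong he) hg)).2, (inv_mul_cancel_left e g).symm⟩
  · rintro ⟨e, he, h, hoff, hdiag, rfl⟩
    exact mul_mem (Esub_le_SLcong he)
      (mem_SLcong_iff.2 ⟨fun i j hij => hoff i j hij ▸ a.zero_mem, hdiag⟩)

/-- For an ideal `𝔞` of a commutative local ring `R` and `n ≥ 2`,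
`SL(n,R,𝔞) = E(n,𝔞)·T(n,R,𝔞)`. -/
theorem SLcong_eq_Esub_mul_torus_of_localRing
    {R : Type*} [CommRing R] [IsLocalRing R] (n : ℕ) (hn : 2 ≤ n) (a : Ideal R)
    (g : SL n R) :
    g ∈ SLcong n a ↔
      ∃ e ∈ Esub n (a : Set R), ∃ h : SL n R,
        (∀ i j : Fin n, i ≠ j → h.val i j = 0) ∧
        (∀ i : Fin n, h.val i i - 1 ∈ a) ∧
        g = e * h :=
  SLcong_eq_Esub_mul_torus_of_localRing_general n a g
end

section
/- Let R be a commutative ring, n ≥ 3 a natural number, and 𝔞 an ideal of R. Then the absolute standard commutator formulae hold: ⁅SL(n,R), E(n,R,𝔞)⁆ = E(n,R,𝔞) and ⁅E(n,R), C(n,R,𝔞)⁆ = E(n,R,𝔞). (Type A_{n−1} instance of the paper's Lemma 10, the absolute standard commutator formulae for Chevalley groups; for type A no residue-field hypothesis is needed.) -/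
open Matrix

/-!
For `n ≥ 3` everything rests on Suslin's factorisation: if `w ⬝ᵥ v = 0` and `w r = 0`, then
`1 + v wᵀ = ⁅1 + v' e_rᵀ, 1 + e_r wᵀ⁆ * (1 + v_r e_r wᵀ)` with `v' = v - v_r e_r`. The first
factor lies in `E(n,R)` and, when `w` has entries in `𝔞`, the other two in `E(n,𝔞)`.
If `v` is unimodular, every `w ⊥ v` with entries in `𝔞` is a sum of vectors
`c (v_p e_q - v_q e_p)` with `c ∈ 𝔞`, each vanishing at a third index; since
`g e_ij(t) g⁻¹ = 1 + (g e_i)(t e_jᵀ g⁻¹)`, this makes `E(n,R,𝔞)` normal in `SL(n,R)`.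
If moreover `g ≡ 1 mod 𝔞`, the same factorisation gives `g e_ij(t) g⁻¹ ≡ e_ij(t)` modulo
`E(n,R,𝔞)`, hence `⁅E(n,R), SL(n,R,𝔞)⁆ ≤ E(n,R,𝔞)`. Commutators with elements of `C(n,R,𝔞)`
lie in `SL(n,R,𝔞)`, so writing `e_ij(t) = ⁅e_ik(t), e_kj(1)⁆` the Hall–Witt identity extends
this to `C(n,R,𝔞)`. The same commutator formula gives the reverse inclusions.
-/

open scoped commutatorElement

namespace Subgroup

variable {G : Type*} [Group G] {N : Subgroup G} [hN : N.Normal]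

theorem commutatorElement_mem_of_mem_closure {S : Set G} {g x : G}
    (hS : ∀ s ∈ S, ⁅s, g⁆ ∈ N) (hx : x ∈ closure S) : ⁅x, g⁆ ∈ N := by
  induction hx using closure_induction with
  | mem s hs => exact hS s hs
  | one => simp [N.one_mem]
  | mul x y _ _ hx hy =>
    rw [show ⁅x * y, g⁆ = x * ⁅y, g⁆ * x⁻¹ * ⁅x, g⁆ by group]
    exact N.mul_mem (hN.conj_mem _ hy x) hx
  | inv x _ hx =>
    rw [show ⁅x⁻¹, g⁆ = x⁻¹ * ⁅x, g⁆⁻¹ * x⁻¹⁻¹ by group]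
    exact hN.conj_mem _ (N.inv_mem hx) x⁻¹

theorem commutatorElement_commutatorElement_mem {a b c : G} (hb : ⁅b, ⁅c⁻¹, a⁻¹⁆⁆ ∈ N)
    (hc : ⁅a⁻¹, ⁅b⁻¹, c⁆⁆ ∈ N) : ⁅⁅a, b⁆, c⁆ ∈ N := by
  have hallWitt := conj_commutatorElement_left_commutatorElement_mul a⁻¹ b c
  rw [inv_inv] at hallWitt
  have key : a⁻¹ * ⁅⁅a, b⁆, c⁆ * a
      = (c * ⁅⁅c⁻¹, a⁻¹⁆, b⁆ * c⁻¹ * (b * ⁅⁅b⁻¹, c⁆, a⁻¹⁆ * b⁻¹))⁻¹ :=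
    eq_inv_of_mul_eq_one_left (by simpa only [mul_assoc] using hallWitt)
  rw [← commutatorElement_inv] at hb hc
  rw [show ⁅⁅a, b⁆, c⁆ = a * (a⁻¹ * ⁅⁅a, b⁆, c⁆ * a) * a⁻¹ by group, key]
  exact hN.conj_mem _ (N.inv_mem (N.mul_mem (hN.conj_mem _ (inv_mem_iff.1 hb) c)
    (hN.conj_mem _ (inv_mem_iff.1 hc) b))) a

end Subgroup

theorem Matrix.det_one_add_vecMulVec {m R : Type*} [Fintype m] [DecidableEq m] [CommRing R]
    (x y : m → R) : (1 + vecMulVec x y).det = 1 + y ⬝ᵥ x := by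
  rw [vecMulVec_eq Unit, det_one_add_replicateCol_mul_replicateRow]

theorem Matrix.one_add_vecMulVec_mul_one_add_vecMulVec {m R : Type*} [Fintype m]
    [DecidableEq m] [CommRing R] (x y x' y' : m → R) :
    (1 + vecMulVec x y) * (1 + vecMulVec x' y')
      = 1 + vecMulVec x y + vecMulVec x' y' + vecMulVec x ((y ⬝ᵥ x') • y') := by
  rw [mul_add, add_mul, add_mul, one_mul, one_mul, mul_one, vecMulVec_mul_vecMulVec]
  abel

theorem Matrix.vecMulVec_single_single {m R : Type*} [DecidableEq m] [MulZeroClass R]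
    (i j : m) (a b : R) : vecMulVec (Pi.single i a) (Pi.single j b) = single i j (a * b) := by
  ext k l
  simp only [vecMulVec_apply, Pi.single_apply, Matrix.single_apply, ite_and, eq_comm, ite_mul,
    mul_ite, zero_mul, mul_zero]
  split_ifs <;> rfl

namespace SL

variable {R : Type*} [CommRing R] {n : ℕ}

def transv (x y : Fin n → R) (h : y ⬝ᵥ x = 0) : SL n R :=
  ⟨1 + vecMulVec x y, by rw [det_one_add_vecMulVec, h, add_zero]⟩

@[simp]
theorem coe_transv (x y : Fin n → R) (h : y ⬝ᵥ x = 0) :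
    (transv x y h : Matrix (Fin n) (Fin n) R) = 1 + vecMulVec x y :=
  rfl

theorem transv_zero_left (y : Fin n → R) : transv 0 y (dotProduct_zero y) = 1 :=
  Subtype.ext (by rw [coe_transv, zero_vecMulVec, add_zero]; rfl)

theorem transv_zero_right (x : Fin n → R) : transv x 0 (zero_dotProduct x) = 1 :=
  Subtype.ext (by rw [coe_transv, vecMulVec_zero, add_zero]; rfl)

theorem transv_mul_transv_add_left {x x' y : Fin n → R} (hx : y ⬝ᵥ x = 0)
    (hx' : y ⬝ᵥ x' = 0) :
    transv x y hx * transv x' y hx'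
      = transv (x + x') y (by rw [dotProduct_add, hx, hx', add_zero]) := by
  apply Subtype.ext
  simp [one_add_vecMulVec_mul_one_add_vecMulVec, hx', add_vecMulVec, add_assoc]

theorem transv_mul_transv_add_right {x y y' : Fin n → R} (hy : y ⬝ᵥ x = 0)
    (hy' : y' ⬝ᵥ x = 0) :
    transv x y hy * transv x y' hy'
      = transv x (y + y') (by rw [add_dotProduct, hy, hy', add_zero]) := by
  apply Subtype.ext
  simp [one_add_vecMulVec_mul_one_add_vecMulVec, hy, vecMulVec_add, add_assoc]

theorem transv_inv {x y : Fin n → R} (h : y ⬝ᵥ x = 0) :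
    (transv x y h)⁻¹ = transv (-x) y (by rw [dotProduct_neg, h, neg_zero]) := by
  rw [inv_eq_iff_mul_eq_one, transv_mul_transv_add_left]
  apply Subtype.ext
  rw [coe_transv, add_neg_cancel, zero_vecMulVec, add_zero, Matrix.SpecialLinearGroup.coe_one]

theorem vecMul_inv_dotProduct_mulVec (g : SL n R) (x y : Fin n → R) :
    (x ᵥ* (g⁻¹ : SL n R)) ⬝ᵥ ((g : Matrix (Fin n) (Fin n) R) *ᵥ y) = x ⬝ᵥ y := by
  rw [dotProduct_mulVec, vecMul_vecMul, ← Matrix.SpecialLinearGroup.coe_mul, inv_mul_cancel,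
    Matrix.SpecialLinearGroup.coe_one, vecMul_one]

theorem conj_transv (g : SL n R) {x y : Fin n → R} (h : y ⬝ᵥ x = 0) :
    g * transv x y h * g⁻¹ = transv (g *ᵥ x) (y ᵥ* (g⁻¹ : SL n R))
      (by rw [vecMul_inv_dotProduct_mulVec, h]) := by
  apply Subtype.ext
  rw [Matrix.SpecialLinearGroup.coe_mul, Matrix.SpecialLinearGroup.coe_mul, coe_transv,
    coe_transv, mul_add, add_mul, mul_one, mul_vecMulVec, vecMulVec_mul,
    ← Matrix.SpecialLinearGroup.coe_mul, mul_inv_cancel, Matrix.SpecialLinearGroup.coe_one]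

theorem elemTransv_eq_transv {i j : Fin n} (hij : i ≠ j) {a b c : R} (habc : b * c = a) :
    elemTransv i j hij a = transv (Pi.single i b) (Pi.single j c)
      (by simp [hij.symm]) := by
  apply Subtype.ext
  rw [coe_transv, vecMulVec_single_single, habc]
  rfl

theorem commutator_transv_transv {x e f y : Fin n → R} (hxe : e ⬝ᵥ x = 0) (hfy : y ⬝ᵥ f = 0)
    (hef : e ⬝ᵥ f = 1) (hxy : y ⬝ᵥ x = 0) :
    ⁅transv x e hxe, transv f y hfy⁆ = transv x y hxy := by
  rw [commutatorElement_def, transv_inv, transv_inv]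
  apply Subtype.ext
  simp only [Matrix.SpecialLinearGroup.coe_mul, coe_transv, mul_add, add_mul, one_mul, mul_one,
    neg_vecMulVec, mul_neg, neg_mul, neg_neg, neg_add_rev, vecMulVec_mul_vecMulVec, hxe, hfy,
    hef, hxy, zero_smul, one_smul, vecMulVec_zero, add_zero]
  abel

theorem commutator_elemTransv {i j k : Fin n} (hij : i ≠ j) (hjk : j ≠ k) (hik : i ≠ k)
    (a b : R) : ⁅elemTransv i j hij a, elemTransv j k hjk b⁆ = elemTransv i k hik (a * b) := by
  rw [elemTransv_eq_transv hij (mul_one a), elemTransv_eq_transv hjk (one_mul b),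
    elemTransv_eq_transv hik rfl, commutator_transv_transv]
  simp

theorem elemTransv_mem_Esub {S : Set R} {i j : Fin n} (hij : i ≠ j) {a : R} (ha : a ∈ S) :
    elemTransv i j hij a ∈ Esub n S :=
  Subgroup.subset_closure ⟨i, j, hij, a, ha, rfl⟩

theorem conj_mem_relESet {T S : Set R} {g y : SL n R} (hg : g ∈ Esub n T) (hy : y ∈ Esub n S) :
    g * y * g⁻¹ ∈ relESet n T S := by
  induction hy using Subgroup.closure_induction with
  | mem y hy => exact Subgroup.subset_closure ⟨g, hg, y, hy, rfl⟩
  | one => simp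
  | mul y z _ _ hy hz =>
    rw [show g * (y * z) * g⁻¹ = g * y * g⁻¹ * (g * z * g⁻¹) by group]
    exact Subgroup.mul_mem _ hy hz
  | inv y _ hy =>
    rw [show g * y⁻¹ * g⁻¹ = (g * y * g⁻¹)⁻¹ by group]
    exact Subgroup.inv_mem _ hy

theorem Esub_le_relESet (T S : Set R) : Esub n S ≤ relESet n T S := fun y hy => by
  simpa using conj_mem_relESet (Subgroup.one_mem (Esub n T)) hy

theorem transv_sum_left_mem {H : Subgroup (SL n R)} {ι : Type*} (s : Finset ι)
    {x : ι → Fin n → R} {y : Fin n → R} (hxy : ∀ i ∈ s, y ⬝ᵥ x i = 0)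
    (hx : ∀ i ∈ s, ∀ h, transv (x i) y h ∈ H) {z : Fin n → R} (hz : ∑ i ∈ s, x i = z)
    (h : y ⬝ᵥ z = 0) : transv z y h ∈ H := by
  subst hz
  refine (Finset.sum_induction x (fun z => y ⬝ᵥ z = 0 ∧ ∀ h, transv z y h ∈ H) ?_ ?_
    fun i hi => ⟨hxy i hi, hx i hi⟩).2 h
  · rintro z z' ⟨hz, hzH⟩ ⟨hz', hz'H⟩
    refine ⟨by rw [dotProduct_add, hz, hz', add_zero], fun _ => ?_⟩
    rw [← transv_mul_transv_add_left hz hz']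
    exact H.mul_mem (hzH hz) (hz'H hz')
  · exact ⟨dotProduct_zero y, fun _ => transv_zero_left y ▸ H.one_mem⟩

theorem transv_sum_right_mem {H : Subgroup (SL n R)} {ι : Type*} (s : Finset ι)
    {x : Fin n → R} {y : ι → Fin n → R} (hxy : ∀ i ∈ s, y i ⬝ᵥ x = 0)
    (hy : ∀ i ∈ s, ∀ h, transv x (y i) h ∈ H) {z : Fin n → R} (hz : ∑ i ∈ s, y i = z)
    (h : z ⬝ᵥ x = 0) : transv x z h ∈ H := by
  subst hz
  refine (Finset.sum_induction y (fun z => z ⬝ᵥ x = 0 ∧ ∀ h, transv x z h ∈ H) ?_ ?_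
    fun i hi => ⟨hxy i hi, hy i hi⟩).2 h
  · rintro z z' ⟨hz, hzH⟩ ⟨hz', hz'H⟩
    refine ⟨by rw [add_dotProduct, hz, hz', add_zero], fun _ => ?_⟩
    rw [← transv_mul_transv_add_right hz hz']
    exact H.mul_mem (hzH hz) (hz'H hz')
  · exact ⟨zero_dotProduct x, fun _ => transv_zero_right x ▸ H.one_mem⟩

theorem transv_single_self {r : Fin n} {a b : R} (h : Pi.single r b ⬝ᵥ Pi.single r a = 0) :
    transv (Pi.single r a) (Pi.single r b) h = 1 := by
  have hab : a * b = 0 := by simpa [mul_comm] using h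
  apply Subtype.ext
  rw [coe_transv, vecMulVec_single_single, hab, single_zero, add_zero]
  rfl

theorem transv_single_right_mem_Esub {S : Set R} {x : Fin n → R} {r : Fin n} {c : R}
    (hS : ∀ s, s ≠ r → x s * c ∈ S) (h : Pi.single r c ⬝ᵥ x = 0) :
    transv x (Pi.single r c) h ∈ Esub n S := by
  have hxr : Pi.single r c ⬝ᵥ Pi.single r (x r) = 0 := by simpa using h
  refine transv_sum_left_mem Finset.univ (fun s _ => ?_) (fun s _ _ => ?_)
    (Finset.univ_sum_single x) h
  · by_cases hsr : s = r
    · rwa [hsr]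
    · simp [hsr]
  · by_cases hsr : s = r
    · subst hsr
      rw [transv_single_self hxr]
      exact Subgroup.one_mem _
    · rw [← elemTransv_eq_transv hsr rfl]
      exact elemTransv_mem_Esub hsr (hS s hsr)

theorem transv_single_left_mem_Esub {S : Set R} {y : Fin n → R} {r : Fin n} {c : R}
    (hS : ∀ s, s ≠ r → c * y s ∈ S) (h : y ⬝ᵥ Pi.single r c = 0) :
    transv (Pi.single r c) y h ∈ Esub n S := by
  have hyr : Pi.single r (y r) ⬝ᵥ Pi.single r c = 0 := by simpa using h
  refine transv_sum_right_mem Finset.univ (fun s _ => ?_) (fun s _ _ => ?_)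
    (Finset.univ_sum_single y) h
  · by_cases hsr : s = r
    · rwa [hsr]
    · simp [Ne.symm hsr]
  · by_cases hsr : s = r
    · subst hsr
      rw [transv_single_self hyr]
      exact Subgroup.one_mem _
    · rw [← elemTransv_eq_transv (Ne.symm hsr) rfl]
      exact elemTransv_mem_Esub (Ne.symm hsr) (hS s hsr)

variable {𝔞 : Ideal R}

theorem transv_eq_commutator_mul_transv {v Z : Fin n → R} {r : Fin n} (hr : Z r = 0)
    (h : Z ⬝ᵥ v = 0) :
    transv v Z h
      = ⁅transv (v - Pi.single r (v r)) (Pi.single r 1) (by simp),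
          transv (Pi.single r 1) Z (by simp [hr])⁆
        * transv (Pi.single r (v r)) Z (by simp [hr]) := by
  rw [commutator_transv_transv _ _ (by simp) (by simp [dotProduct_sub, h, hr]),
    transv_mul_transv_add_left]
  simp only [sub_add_cancel]

theorem transv_mem_relE_of_apply_eq_zero {v Z : Fin n → R} {r : Fin n} (hZ : ∀ k, Z k ∈ 𝔞)
    (hr : Z r = 0) (h : Z ⬝ᵥ v = 0) : transv v Z h ∈ relE n 𝔞 := by
  rw [transv_eq_commutator_mul_transv hr h, commutatorElement_def]
  have hA : transv (v - Pi.single r (v r)) (Pi.single r 1) (by simp) ∈ Esub n Set.univ :=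
    transv_single_right_mem_Esub (fun _ _ => Set.mem_univ _) _
  have hB : transv (Pi.single r 1) Z (by simp [hr]) ∈ Esub n 𝔞 :=
    transv_single_left_mem_Esub (fun s _ => by simpa using hZ s) _
  have hT : transv (Pi.single r (v r)) Z (by simp [hr]) ∈ Esub n 𝔞 :=
    transv_single_left_mem_Esub (fun s _ => 𝔞.mul_mem_left _ (hZ s)) _
  exact (relE n 𝔞).mul_mem ((relE n 𝔞).mul_mem (conj_mem_relESet hA hB)
    (Esub_le_relESet _ _ (inv_mem hB))) (Esub_le_relESet _ _ hT)

def suslinVec (v : Fin n → R) (c : R) (p q : Fin n) : Fin n → R :=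
  c • (Pi.single q (v p) - Pi.single p (v q))

theorem suslinVec_dotProduct (v : Fin n → R) (c : R) (p q : Fin n) :
    suslinVec v c p q ⬝ᵥ v = 0 := by
  simp only [suslinVec, smul_dotProduct, sub_dotProduct, single_dotProduct, mul_comm, sub_self,
    smul_zero]

theorem suslinVec_apply_of_ne (v : Fin n → R) (c : R) {p q r : Fin n} (hrp : r ≠ p)
    (hrq : r ≠ q) : suslinVec v c p q r = 0 := by
  simp [suslinVec, hrp, hrq]

theorem sum_suslinVec (u v Z : Fin n → R) :
    ∑ pq : Fin n × Fin n, suslinVec v (u pq.1 * Z pq.2) pq.1 pq.2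
      = (u ⬝ᵥ v) • Z - (Z ⬝ᵥ v) • u := by
  ext k
  simp only [suslinVec, Finset.sum_apply, Pi.smul_apply, Pi.sub_apply, Pi.single_apply,
    smul_eq_mul, mul_sub, mul_ite, mul_zero, Finset.sum_sub_distrib, Fintype.sum_prod_type,
    Finset.sum_ite_irrel, Finset.sum_const_zero, Finset.sum_ite_eq, Finset.mem_univ, if_true,
    dotProduct, Finset.sum_mul]
  congr 1 <;> exact Finset.sum_congr rfl fun _ _ => by ring

theorem transv_mem_relE_of_unimodular (hn : 3 ≤ n) {u v Z : Fin n → R} (huv : u ⬝ᵥ v = 1)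
    (hZ : ∀ k, Z k ∈ 𝔞) (h : Z ⬝ᵥ v = 0) : transv v Z h ∈ relE n 𝔞 := by
  refine transv_sum_right_mem Finset.univ
    (y := fun pq : Fin n × Fin n => suslinVec v (u pq.1 * Z pq.2) pq.1 pq.2)
    (fun pq _ => suslinVec_dotProduct v _ _ _)
    (fun pq _ _ => ?_) (by rw [sum_suslinVec, huv, h, one_smul, zero_smul, sub_zero]) h
  obtain ⟨r, hrp, hrq⟩ := Fin.exists_ne_and_ne_of_two_lt pq.1 pq.2 hn
  exact transv_mem_relE_of_apply_eq_zero (fun _ => 𝔞.mul_mem_right _ (𝔞.mul_mem_left _ (hZ _)))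
    (suslinVec_apply_of_ne v _ hrp hrq) _

theorem conj_elemTransv_mem_relE (hn : 3 ≤ n) (g : SL n R) {i j : Fin n} (hij : i ≠ j) {t : R}
    (ht : t ∈ 𝔞) : g * elemTransv i j hij t * g⁻¹ ∈ relE n 𝔞 := by
  rw [elemTransv_eq_transv hij (one_mul t), conj_transv]
  refine transv_mem_relE_of_unimodular hn (u := Pi.single i 1 ᵥ* (g⁻¹ : SL n R)) ?_
    (fun k => ?_) _
  · rw [vecMul_inv_dotProduct_mulVec]
    simp
  · rw [single_vecMul]
    exact 𝔞.mul_mem_right _ ht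

theorem relE_eq_normalClosure (hn : 3 ≤ n) (𝔞 : Ideal R) :
    relE n 𝔞 = Subgroup.normalClosure (transvSet n 𝔞) := by
  refine le_antisymm ((Subgroup.closure_le _).2 ?_) ((Subgroup.closure_le _).2 ?_)
  · rintro _ ⟨g, -, y, hy, rfl⟩
    exact (Subgroup.normalClosure_normal).conj_mem y (Subgroup.subset_normalClosure hy) g
  · intro x hx
    obtain ⟨_, ⟨i, j, hij, t, ht, rfl⟩, hconj⟩ := Group.mem_conjugatesOfSet_iff.1 hx
    obtain ⟨g, rfl⟩ := isConj_iff.1 hconj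
    exact conj_elemTransv_mem_relE hn g hij ht

theorem relE_normal (hn : 3 ≤ n) (𝔞 : Ideal R) : (relE n 𝔞).Normal := by
  rw [relE_eq_normalClosure hn]
  infer_instance

theorem mem_SLcong_iff {h : SL n R} :
    h ∈ SLcong n 𝔞 ↔ (h : Matrix (Fin n) (Fin n) R).map (Ideal.Quotient.mk 𝔞) = 1 := by
  rw [SLcong, MonoidHom.mem_ker]
  exact ⟨congrArg Subtype.val, fun e => Subtype.ext e⟩

theorem mulVec_sub_mem_of_mem_SLcong {h : SL n R} (hh : h ∈ SLcong n 𝔞) (x : Fin n → R)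
    (k : Fin n) : ((h : Matrix (Fin n) (Fin n) R) *ᵥ x) k - x k ∈ 𝔞 := by
  rw [← Ideal.Quotient.eq, RingHom.map_mulVec, mem_SLcong_iff.1 hh, one_mulVec]
  rfl

theorem vecMul_sub_mem_of_mem_SLcong {h : SL n R} (hh : h ∈ SLcong n 𝔞) (x : Fin n → R)
    (k : Fin n) : (x ᵥ* (h : Matrix (Fin n) (Fin n) R)) k - x k ∈ 𝔞 := by
  rw [← Ideal.Quotient.eq, RingHom.map_vecMul, mem_SLcong_iff.1 hh, vecMul_one]
  rfl

theorem elemTransv_mem_SLcong {i j : Fin n} (hij : i ≠ j) {a : R} (ha : a ∈ 𝔞) :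
    elemTransv i j hij a ∈ SLcong n 𝔞 := by
  rw [SLcong, MonoidHom.mem_ker]
  apply Subtype.ext
  change (transvection i j a).map (Ideal.Quotient.mk 𝔞) = 1
  rw [transvection, Matrix.map_add _ (map_add _), Matrix.map_one _ (map_zero _) (map_one _),
    map_single (f := Ideal.Quotient.mk 𝔞), Ideal.Quotient.eq_zero_iff_mem.2 ha, single_zero,
    add_zero]

theorem Esub_le_SLcong : Esub n (𝔞 : Set R) ≤ SLcong n 𝔞 := by
  refine (Subgroup.closure_le _).2 ?_
  rintro _ ⟨i, j, hij, a, ha, rfl⟩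
  exact elemTransv_mem_SLcong hij ha

theorem SLcong_le_Ccong : SLcong n 𝔞 ≤ Ccong n 𝔞 := fun h hh => by
  rw [Ccong, Subgroup.mem_comap, MonoidHom.mem_ker.1 hh]
  exact Subgroup.one_mem _

theorem commutatorElement_mem_SLcong_of_mem_Ccong {g : SL n R} (hg : g ∈ Ccong n 𝔞)
    (x : SL n R) : ⁅x, g⁆ ∈ SLcong n 𝔞 := by
  rw [SLcong, MonoidHom.mem_ker, map_commutatorElement]
  exact commutatorElement_eq_one_iff_commute.2 (Subgroup.mem_center_iff.1 hg _)

theorem mk_transv_eq_mk_elemTransv [(relE n 𝔞).Normal] {v Z : Fin n → R} {i j r : Fin n}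
    (hij : i ≠ j) (hri : r ≠ i) (hrj : r ≠ j) {t : R}
    (hv : ∀ k, v k - (Pi.single i 1 : Fin n → R) k ∈ 𝔞)
    (hZ : ∀ k, Z k - (Pi.single j t : Fin n → R) k ∈ 𝔞) (hr : Z r = 0) (h : Z ⬝ᵥ v = 0) :
    ((transv v Z h : SL n R) : SL n R ⧸ relE n 𝔞) = elemTransv i j hij t := by
  have hA : transv (v - Pi.single r (v r)) (Pi.single r 1) (by simp)
      = elemTransv i r hri.symm 1
        * transv (v - Pi.single r (v r) - Pi.single i 1) (Pi.single r 1)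
          (by simp [hri.symm]) := by
    rw [elemTransv_eq_transv hri.symm (one_mul 1), transv_mul_transv_add_left]
    congr 1
    abel
  have hB : transv (Pi.single r 1) Z (by simp [hr])
      = elemTransv r j hrj t
        * transv (Pi.single r 1) (Z - Pi.single j t) (by simp [hr, hrj]) := by
    rw [elemTransv_eq_transv hrj (one_mul t), transv_mul_transv_add_right]
    congr 1
    abel
  have hvr : v r ∈ 𝔞 := by simpa [hri] using hv r
  have hA' : transv (v - Pi.single r (v r) - Pi.single i 1) (Pi.single r 1) (by simp [hri.symm])
      ∈ relE n 𝔞 :=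
    Esub_le_relESet _ _ (transv_single_right_mem_Esub (fun s hs => by simpa [hs] using hv s) _)
  have hB' : transv (Pi.single r 1) (Z - Pi.single j t) (by simp [hr, hrj]) ∈ relE n 𝔞 :=
    Esub_le_relESet _ _ (transv_single_left_mem_Esub (fun s _ => by simpa using hZ s) _)
  have hT : transv (Pi.single r (v r)) Z (by simp [hr]) ∈ relE n 𝔞 :=
    Esub_le_relESet _ _ (transv_single_left_mem_Esub (fun s _ => 𝔞.mul_mem_right _ hvr) _)
  have hC : elemTransv i j hij t = ⁅elemTransv i r hri.symm (1 : R), elemTransv r j hrj t⁆ := by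
    rw [commutator_elemTransv, one_mul]
  rw [transv_eq_commutator_mul_transv hr h, hA, hB, hC]
  simp only [commutatorElement_def, _root_.mul_inv_rev, QuotientGroup.mk_mul,
    QuotientGroup.mk_inv, (QuotientGroup.eq_one_iff _).2 hA', (QuotientGroup.eq_one_iff _).2 hB',
    (QuotientGroup.eq_one_iff _).2 hT, inv_one, mul_one, one_mul]

theorem suslinVec_sub_single_mem {v : Fin n → R} {i j : Fin n} (hij : i ≠ j)
    (hv : ∀ k, v k - (Pi.single i 1 : Fin n → R) k ∈ 𝔞) (t : R) (k : Fin n) :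
    suslinVec v t i j k - (Pi.single j t : Fin n → R) k ∈ 𝔞 := by
  have hvi : v i - 1 ∈ 𝔞 := by simpa using hv i
  have hvj : v j ∈ 𝔞 := by simpa [hij.symm] using hv j
  rcases eq_or_ne k j with rfl | hkj
  · simpa [suslinVec, hij, mul_sub] using 𝔞.mul_mem_left t hvi
  · by_cases hki : k = i
    · subst hki
      simpa [suslinVec, hkj] using 𝔞.mul_mem_left t hvj
    · simp [suslinVec, hkj, hki]

theorem commutatorElement_mem_relE_of_mem_SLcong (hn : 3 ≤ n) {h : SL n R}
    (hh : h ∈ SLcong n 𝔞) {i j : Fin n} (hij : i ≠ j) (t : R) :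
    ⁅h, elemTransv i j hij t⁆ ∈ relE n 𝔞 := by
  have := relE_normal hn 𝔞
  obtain ⟨r, hri, hrj⟩ := Fin.exists_ne_and_ne_of_two_lt i j hn
  set v := (h : Matrix (Fin n) (Fin n) R) *ᵥ Pi.single i 1
  set Z := Pi.single j t ᵥ* ((h⁻¹ : SL n R) : Matrix (Fin n) (Fin n) R)
  have hv : ∀ k, v k - (Pi.single i 1 : Fin n → R) k ∈ 𝔞 := mulVec_sub_mem_of_mem_SLcong hh _
  have hZ : ∀ k, Z k - (Pi.single j t : Fin n → R) k ∈ 𝔞 :=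
    vecMul_sub_mem_of_mem_SLcong (inv_mem hh) _
  have hZ₀ := suslinVec_sub_single_mem hij hv t
  have hZv : Z ⬝ᵥ v = 0 := (vecMul_inv_dotProduct_mulVec h _ _).trans (by simp [hij.symm])
  have hZv' : (Z - suslinVec v t i j) ⬝ᵥ v = 0 := by
    rw [sub_dotProduct, hZv, suslinVec_dotProduct, sub_zero]
  have hconj : h * elemTransv i j hij t * h⁻¹
      = transv v (Z - suslinVec v t i j) hZv'
        * transv v (suslinVec v t i j) (suslinVec_dotProduct v t i j) := by
    rw [elemTransv_eq_transv hij (one_mul t), conj_transv, transv_mul_transv_add_right]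
    congr 1
    abel
  have hmem : transv v (Z - suslinVec v t i j) hZv' ∈ relE n 𝔞 :=
    transv_mem_relE_of_unimodular hn ((vecMul_inv_dotProduct_mulVec h (Pi.single i 1) _).trans
      (by simp)) (fun k => by simpa using 𝔞.sub_mem (hZ k) (hZ₀ k)) _
  have hblock := mk_transv_eq_mk_elemTransv hij hri hrj hv hZ₀
    (suslinVec_apply_of_ne v t hri hrj) (suslinVec_dotProduct v t i j)
  rw [← QuotientGroup.eq_one_iff, commutatorElement_def, QuotientGroup.mk_mul, hconj,
    QuotientGroup.mk_mul, (QuotientGroup.eq_one_iff _).2 hmem, hblock, one_mul,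
    QuotientGroup.mk_inv, mul_inv_cancel]

theorem commutatorElement_mem_relE_of_mem_Esub_of_mem_SLcong (hn : 3 ≤ n) {x h : SL n R}
    (hx : x ∈ Esub n Set.univ) (hh : h ∈ SLcong n 𝔞) : ⁅x, h⁆ ∈ relE n 𝔞 := by
  have := relE_normal hn 𝔞
  refine Subgroup.commutatorElement_mem_of_mem_closure (fun s hs => ?_) hx
  obtain ⟨i, j, hij, a, -, rfl⟩ := hs
  rw [← commutatorElement_inv]
  exact inv_mem (commutatorElement_mem_relE_of_mem_SLcong hn hh hij a)

theorem commutatorElement_elemTransv_mem_relE_of_mem_Ccong (hn : 3 ≤ n) {g : SL n R}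
    (hg : g ∈ Ccong n 𝔞) {i j : Fin n} (hij : i ≠ j) (t : R) :
    ⁅elemTransv i j hij t, g⁆ ∈ relE n 𝔞 := by
  have := relE_normal hn 𝔞
  obtain ⟨k, hki, hkj⟩ := Fin.exists_ne_and_ne_of_two_lt i j hn
  rw [← mul_one t, ← commutator_elemTransv hki.symm hkj hij]
  have hp := elemTransv_mem_Esub hki.symm (Set.mem_univ t)
  have hq := elemTransv_mem_Esub hkj (Set.mem_univ (1 : R))
  refine Subgroup.commutatorElement_commutatorElement_mem
    (commutatorElement_mem_relE_of_mem_Esub_of_mem_SLcong hn hq ?_)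
    (commutatorElement_mem_relE_of_mem_Esub_of_mem_SLcong hn (inv_mem hp)
      (commutatorElement_mem_SLcong_of_mem_Ccong hg _))
  rw [← commutatorElement_inv]
  exact inv_mem (commutatorElement_mem_SLcong_of_mem_Ccong (inv_mem hg) _)

theorem commutatorElement_mem_relE_of_mem_Esub_of_mem_Ccong (hn : 3 ≤ n) {x g : SL n R}
    (hx : x ∈ Esub n Set.univ) (hg : g ∈ Ccong n 𝔞) : ⁅x, g⁆ ∈ relE n 𝔞 := by
  have := relE_normal hn 𝔞
  refine Subgroup.commutatorElement_mem_of_mem_closure (fun s hs => ?_) hx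
  obtain ⟨i, j, hij, a, -, rfl⟩ := hs
  exact commutatorElement_elemTransv_mem_relE_of_mem_Ccong hn hg hij a

theorem relE_le_commutator (hn : 3 ≤ n) {H K : Subgroup (SL n R)} (hH : Esub n Set.univ ≤ H)
    (hK : Esub n (𝔞 : Set R) ≤ K) : relE n 𝔞 ≤ ⁅H, K⁆ := by
  refine (Subgroup.closure_le _).2 ?_
  rintro _ ⟨g, hg, _, ⟨i, j, hij, t, ht, rfl⟩, rfl⟩
  obtain ⟨k, hki, hkj⟩ := Fin.exists_ne_and_ne_of_two_lt i j hn
  have he : elemTransv i j hij t ∈ ⁅H, K⁆ := by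
    rw [← mul_one t, ← commutator_elemTransv hki.symm hkj hij, ← commutatorElement_inv]
    exact inv_mem (Subgroup.commutator_mem_commutator
      (hH (elemTransv_mem_Esub hkj (Set.mem_univ _))) (hK (elemTransv_mem_Esub hki.symm ht)))
  rw [show g * elemTransv i j hij t * g⁻¹ = ⁅g, elemTransv i j hij t⁆ * elemTransv i j hij t by
    group]
  exact Subgroup.mul_mem _
    (Subgroup.commutator_mem_commutator (hH hg) (hK (elemTransv_mem_Esub hij ht))) he

end SL

/-- The absolute standard commutator formulae: for `n ≥ 3` and an ideal `𝔞 ⊴ R`,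
`⁅SL(n,R), E(n,R,𝔞)⁆ = E(n,R,𝔞)` and `⁅E(n,R), C(n,R,𝔞)⁆ = E(n,R,𝔞)`. -/
theorem absolute_standard_commutator_formulae
    {R : Type*} [CommRing R] (n : ℕ) (hn : 3 ≤ n) (a : Ideal R) :
    ⁅(⊤ : Subgroup (SL n R)), relE n a⁆ = relE n a ∧
      ⁅Esub n (Set.univ : Set R), Ccong n a⁆ = relE n a := by
  have := SL.relE_normal hn a
  refine ⟨le_antisymm (Subgroup.commutator_le_right _ _)
      (SL.relE_le_commutator hn le_top (SL.Esub_le_relESet _ _)),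
    le_antisymm ?_
      (SL.relE_le_commutator hn le_rfl (SL.Esub_le_SLcong.trans SL.SLcong_le_Ccong))⟩
  exact Subgroup.commutator_le.2 fun x hx g hg =>
    SL.commutatorElement_mem_relE_of_mem_Esub_of_mem_Ccong hn hx hg
end

section
/- Let R be a commutative ring, n ≥ 3 a natural number, and s, t ∈ R. For all natural numbers p, q, k there exist natural numbers h and m, depending only on n, k, p, q and not on the ideal 𝔞, such that for every ideal 𝔞 of R, every pair of indices i ≠ j, every r ∈ R, and every y ∈ E(n, s^h t^m 𝔞), the conjugate e_{ij}(F(r)·F(s)^{−k}) · y · e_{ij}(F(r)·F(s)^{−k})⁻¹ lies in E(n, s^p t^q R, s^p t^q 𝔞), all inside SL(n, R_{st}). (Type A_{n−1} instance of the paper's key relative conjugation calculus lemma with two denominators.) -/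
open Matrix

/-- `s^p t^q 𝔞 = {F(s^p·t^q·c) : c ∈ S} ⊆ R_{st}`, where
`F : R → R_{st} = Localization.Away (s·t)` is the canonical map. -/
def stMulSet {R : Type*} [CommRing R] (s t : R) (p q : ℕ) (S : Set R) :
    Set (Localization.Away (s * t)) :=
  { x | ∃ c ∈ S, x = algebraMap R (Localization.Away (s * t)) (s ^ p * t ^ q * c) }

/-!
Conjugation by `e_{ij}(x)` sends a generator `e_{uv}(w)` to `e_{uv}(w)` times at most one
further generator with parameter `±x·w`, unless `(u, v) = (j, i)`. In that case one factors
`w = b·c` with `b` of level `s^{p+k} t^q 𝔞` and `c` of level `s^{p+k} t^q R` (this is what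
`h = 2(p+k)`, `m = 2q` buys), writes `e_{ji}(bc) = [e_{jl}(b), e_{li}(c)]` through a third index
`l ∉ {i, j}`, and conjugates both factors: the result is a commutator of an element
of `E(n, s^p t^q R, s^p t^q 𝔞)` with one of `E(n, s^p t^q R)`. Since `x = F(r)·F(s)^{-k}`,
multiplying by `x` only lowers the power of `s` by `k`, so all parameters have the required level.
-/

open Pointwise
open scoped commutatorElement

section Transvections

variable {n : ℕ} {L : Type*} [CommRing L]

@[simp]
theorem coe_elemTransv (i j : Fin n) (hij : i ≠ j) (a : L) :
    (elemTransv i j hij a : Matrix (Fin n) (Fin n) L) = transvection i j a :=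
  rfl

theorem elemTransv_mul_elemTransv (i j : Fin n) (hij : i ≠ j) (a b : L) :
    elemTransv i j hij a * elemTransv i j hij b = elemTransv i j hij (a + b) :=
  Subtype.ext (transvection_mul_transvection_same i j hij a b)

theorem elemTransv_neg (i j : Fin n) (hij : i ≠ j) (a : L) :
    elemTransv i j hij (-a) = (elemTransv i j hij a)⁻¹ :=
  eq_inv_of_mul_eq_one_left <| by
    rw [elemTransv_mul_elemTransv, neg_add_cancel]
    exact Subtype.ext (transvection_zero i j)

theorem elemTransv_commute {i j u v : Fin n} (hij : i ≠ j) (huv : u ≠ v) (hju : j ≠ u)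
    (hvi : v ≠ i) (x w : L) : Commute (elemTransv i j hij x) (elemTransv u v huv w) :=
  Subtype.ext (by
    simp only [Matrix.SpecialLinearGroup.coe_mul]
    simp only [coe_elemTransv, transvection, add_mul, mul_add, one_mul, mul_one,
      single_mul_single_of_ne _ _ _ _ hju, single_mul_single_of_ne _ _ _ _ hvi]
    abel)

theorem conj_elemTransv_right {i j v : Fin n} (hij : i ≠ j) (hjv : j ≠ v) (hiv : i ≠ v)
    (x w : L) :
    elemTransv i j hij x * elemTransv j v hjv w * (elemTransv i j hij x)⁻¹
      = elemTransv j v hjv w * elemTransv i v hiv (x * w) :=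
  mul_inv_eq_of_eq_mul <| Subtype.ext (by
    simp only [Matrix.SpecialLinearGroup.coe_mul]
    simp only [coe_elemTransv, transvection, add_mul, mul_add, one_mul, mul_one, add_zero,
      single_mul_single_same, single_mul_single_of_ne _ _ _ _ hiv.symm]
    abel)

theorem conj_elemTransv_left {i j u : Fin n} (hij : i ≠ j) (hui : u ≠ i) (huj : u ≠ j)
    (x w : L) :
    elemTransv i j hij x * elemTransv u i hui w * (elemTransv i j hij x)⁻¹
      = elemTransv u i hui w * (elemTransv u j huj (x * w))⁻¹ := by
  rw [← elemTransv_neg u j huj, mul_comm x w]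
  exact mul_inv_eq_of_eq_mul <| Subtype.ext (by
    simp only [Matrix.SpecialLinearGroup.coe_mul]
    simp only [coe_elemTransv, transvection, add_mul, mul_add, one_mul, mul_one, add_zero,
      single_mul_single_same, ← single_neg, neg_mul, mul_neg,
      single_mul_single_of_ne _ _ _ _ huj.symm, single_mul_single_of_ne _ _ _ _ hui.symm,
      single_mul_single_of_ne _ _ _ _ hij.symm]
    abel)

theorem elemTransv_mul_eq_commutatorElement {i j l : Fin n} (hji : j ≠ i) (hjl : j ≠ l)
    (hli : l ≠ i) (b c : L) :
    elemTransv j i hji (b * c) = ⁅elemTransv j l hjl b, elemTransv l i hli c⁆ := by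
  rw [commutatorElement_def, ← elemTransv_neg, ← elemTransv_neg]
  exact Subtype.ext (by
    simp only [Matrix.SpecialLinearGroup.coe_mul]
    simp only [coe_elemTransv, transvection, add_mul, mul_add, one_mul, mul_one, add_zero,
      single_mul_single_same, ← single_neg, neg_mul, mul_neg,
      single_mul_single_of_ne _ _ _ _ hjl.symm, single_mul_single_of_ne _ _ _ _ hli.symm,
      single_mul_single_of_ne _ _ _ _ hji.symm]
    abel)

end Transvections

theorem Subgroup.conj_mem_of_mem_closure {G : Type*} [Group G] {X : Set G} {H : Subgroup G}
    {g : G} (hX : ∀ y ∈ X, g * y * g⁻¹ ∈ H) {y : G} (hy : y ∈ Subgroup.closure X) :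
    g * y * g⁻¹ ∈ H :=
  (Subgroup.closure_le (H.comap (MulAut.conj g).toMonoidHom)).2 hX hy

section RelativeElementary

variable {n : ℕ} {L : Type*} [CommRing L] {T S : Set L}

theorem elemTransv_mem_Esub {i j : Fin n} (hij : i ≠ j) {a : L} (ha : a ∈ S) :
    elemTransv i j hij a ∈ Esub n S :=
  Subgroup.subset_closure ⟨i, j, hij, a, ha, rfl⟩

theorem elemTransv_mem_relESet {i j : Fin n} (hij : i ≠ j) {a : L} (ha : a ∈ S) :
    elemTransv i j hij a ∈ relESet n T S :=
  Subgroup.subset_closure ⟨1, one_mem _, _, ⟨i, j, hij, a, ha, rfl⟩, by group⟩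

theorem conj_mem_relESet {g z : SL n L} (hg : g ∈ Esub n T) (hz : z ∈ relESet n T S) :
    g * z * g⁻¹ ∈ relESet n T S := by
  refine Subgroup.conj_mem_of_mem_closure ?_ hz
  rintro _ ⟨g', hg', y, hy, rfl⟩
  exact Subgroup.subset_closure ⟨g * g', mul_mem hg hg', y, hy, by group⟩

theorem commutatorElement_mem_relESet {z g : SL n L} (hz : z ∈ relESet n T S)
    (hg : g ∈ Esub n T) : ⁅z, g⁆ ∈ relESet n T S := by
  rw [commutatorElement_def, mul_assoc, mul_assoc, ← mul_assoc g]
  exact mul_mem hz (conj_mem_relESet hg (inv_mem hz))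

theorem conj_elemTransv_elemTransv_mem_relESet (hn : 3 ≤ n) {i j u v : Fin n} (hij : i ≠ j)
    (huv : u ≠ v) {x b c : L} (hb : b ∈ S) (hxb : x * b ∈ S) (hc : c ∈ T) (hxc : x * c ∈ T)
    (hw : b * c ∈ S) (hxw : x * (b * c) ∈ S) :
    elemTransv i j hij x * elemTransv u v huv (b * c) * (elemTransv i j hij x)⁻¹
      ∈ relESet n T S := by
  rcases eq_or_ne u j with rfl | huj <;> rcases eq_or_ne v i with rfl | hvi
  · obtain ⟨l, hlv, hlu⟩ := Fin.exists_ne_and_ne_of_two_lt v u hn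
    rw [elemTransv_mul_eq_commutatorElement huv (Ne.symm hlu) hlv, conjugate_commutatorElement,
      conj_elemTransv_right hij (Ne.symm hlu) (Ne.symm hlv),
      conj_elemTransv_left hij hlv hlu]
    exact commutatorElement_mem_relESet
      (mul_mem (elemTransv_mem_relESet _ hb) (elemTransv_mem_relESet _ hxb))
      (mul_mem (elemTransv_mem_Esub _ hc) (inv_mem (elemTransv_mem_Esub _ hxc)))
  · rw [conj_elemTransv_right hij huv hvi.symm]
    exact mul_mem (elemTransv_mem_relESet _ hw) (elemTransv_mem_relESet _ hxw)
  · rw [conj_elemTransv_left hij huv huj]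
    exact mul_mem (elemTransv_mem_relESet _ hw) (inv_mem (elemTransv_mem_relESet _ hxw))
  · rw [(elemTransv_commute hij huv huj.symm hvi _ _).mul_inv_cancel]
    exact elemTransv_mem_relESet _ hw

theorem conj_elemTransv_mem_relESet (hn : 3 ≤ n) {x : L} {S' T' W : Set L}
    (hS : ∀ b ∈ S', b ∈ S ∧ x * b ∈ S) (hT : ∀ c ∈ T', c ∈ T ∧ x * c ∈ T)
    (hWS : W ⊆ S') (hWST : W ⊆ S' * T') {i j : Fin n} (hij : i ≠ j) {y : SL n L}
    (hy : y ∈ Esub n W) :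
    elemTransv i j hij x * y * (elemTransv i j hij x)⁻¹ ∈ relESet n T S := by
  refine Subgroup.conj_mem_of_mem_closure ?_ hy
  rintro _ ⟨u, v, huv, w, hw, rfl⟩
  obtain ⟨b, hb, c, hc, rfl⟩ := hWST hw
  exact conj_elemTransv_elemTransv_mem_relESet hn hij huv (hS b hb).1 (hS b hb).2 (hT c hc).1
    (hT c hc).2 (hS _ (hWS hw)).1 (hS _ (hWS hw)).2

end RelativeElementary

section Localization

variable {R : Type*} [CommRing R] (s t : R)

theorem stMulSet_subset_stMulSet (I : Ideal R) {p q p' q' : ℕ} (hp : p ≤ p') (hq : q ≤ q') :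
    stMulSet s t p' q' I ⊆ stMulSet s t p q I := by
  obtain ⟨d, rfl⟩ := Nat.exists_eq_add_of_le hp
  obtain ⟨e, rfl⟩ := Nat.exists_eq_add_of_le hq
  rintro _ ⟨c, hc, rfl⟩
  exact ⟨s ^ d * t ^ e * c, I.mul_mem_left _ hc, by ring_nf⟩

theorem stMulSet_add_subset_mul (I : Ideal R) (p q p' q' : ℕ) :
    stMulSet s t (p + p') (q + q') I ⊆ stMulSet s t p q I * stMulSet s t p' q' (⊤ : Ideal R) := by
  rintro _ ⟨c, hc, rfl⟩
  refine ⟨_, ⟨c, hc, rfl⟩, _, ⟨1, trivial, rfl⟩, ?_⟩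
  dsimp only
  rw [← map_mul]
  ring_nf

theorem mk_mul_mem_stMulSet (I : Ideal R) (r : R) (p q k : ℕ) {y : Localization.Away (s * t)}
    (hy : y ∈ stMulSet s t (p + k) q I) :
    Localization.mk (r * t ^ k) (⟨(s * t) ^ k, k, rfl⟩ : Submonoid.powers (s * t)) * y
      ∈ stMulSet s t p q I := by
  obtain ⟨c, hc, rfl⟩ := hy
  refine ⟨r * c, I.mul_mem_left r hc, ?_⟩
  rw [← Localization.mk_one_eq_algebraMap, ← Localization.mk_one_eq_algebraMap,
    Localization.mk_mul, Localization.mk_eq_mk_iff, Localization.r_iff_exists]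
  exact ⟨1, by simp only [OneMemClass.coe_one, one_mul, mul_one]; ring⟩

end Localization

/-- The relative conjugation calculus lemma (type `A_{n-1}`): given `p, q, k`
there exist `h, m` (independent of the ideal `𝔞`) such that for every ideal
`𝔞 ⊴ R`, conjugation by any `e_{ij}(F(r)·F(s)^{-k})` carries `E(n, s^h t^m 𝔞)`
into `E(n, s^p t^q R, s^p t^q 𝔞)` inside `SL(n, R_{st})`.
Here `F(r)·F(s)^{-k}` is the element `Localization.mk (r·t^k) ⟨(s·t)^k, _⟩`. -/
theorem exists_conjugation_calculus
    {R : Type*} [CommRing R] (n : ℕ) (hn : 3 ≤ n) (s t : R) (p q k : ℕ) :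
    ∃ h m : ℕ, ∀ a : Ideal R, ∀ i j : Fin n, ∀ hij : i ≠ j, ∀ r : R,
      ∀ y ∈ Esub n (stMulSet s t h m (a : Set R)),
        elemTransv i j hij (Localization.mk (r * t ^ k) (⟨(s * t) ^ k, k, rfl⟩ : Submonoid.powers (s * t))) * y *
            (elemTransv i j hij (Localization.mk (r * t ^ k) (⟨(s * t) ^ k, k, rfl⟩ : Submonoid.powers (s * t))))⁻¹ ∈
          relESet n (stMulSet s t p q (Set.univ : Set R))
            (stMulSet s t p q (a : Set R)) := by
  refine ⟨p + k + (p + k), q + q, fun a i j hij r y hy => ?_⟩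
  set x : Localization.Away (s * t) :=
    Localization.mk (r * t ^ k) (⟨(s * t) ^ k, k, rfl⟩ : Submonoid.powers (s * t))
  have hx (I : Ideal R) (b) (hb : b ∈ stMulSet s t (p + k) q I) :
      b ∈ stMulSet s t p q I ∧ x * b ∈ stMulSet s t p q I :=
    ⟨stMulSet_subset_stMulSet s t I (Nat.le_add_right p k) le_rfl hb,
      mk_mul_mem_stMulSet s t I r p q k hb⟩
  exact conj_elemTransv_mem_relESet hn (hx a) (hx ⊤)
    (stMulSet_subset_stMulSet s t a (Nat.le_add_right _ _) (Nat.le_add_right _ _))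
    (stMulSet_add_subset_mul s t a _ _ _ _) hij hy
end
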